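/- arXiv:2209.01070 — 6 statements merged into one kernel-verified Lean document; each statement's English description precedes it below -/
import Mathlib

section
/- Let X be a symmetric Δ-complex, α ∈ X_p a face of β ∈ X_{p+1} satisfying permissibility condition (1). If ρ, ρ' : [p] → [p+1] both glue α to β, then the induced maps f_ρ and f_{ρ'} : Aut(β) → Aut(α) differ by conjugation by a permutation of [p], i.e., there exists a permutation i of [p] with f_{ρ'}(π) = i^{-1} ∘ f_ρ(π) ∘ i for all π ∈ Aut(β). -/
structure SymDelta where
  X : ℕ → Type
  act : ∀ {p q : ℕ}, (Fin (p + 1) → Fin (q + 1)) → X q → X p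
  act_id : ∀ (p : ℕ) (x : X p), act id x = x
  act_comp : ∀ {p q r : ℕ} (θ : Fin (q + 1) → Fin (r + 1)) (φ : Fin (p + 1) → Fin (q + 1)),
    Function.Injective θ → Function.Injective φ →
    ∀ x : X r, act (θ ∘ φ) x = act φ (act θ x)

namespace SymDelta

variable (D : SymDelta)

/-- `θ` glues `α` to `β`. -/
def Glues {p q : ℕ} (θ : Fin (p + 1) → Fin (q + 1)) (α : D.X p) (β : D.X q) : Prop :=
  Function.Injective θ ∧ D.act θ β = α

/-- `α` is a face of `β`. -/
def IsFace {p q : ℕ} (α : D.X p) (β : D.X q) : Prop :=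
  ∃ θ : Fin (p + 1) → Fin (q + 1), D.Glues θ α β

/-- `α'` is in the symmetric orbit of `α`. -/
def InOrbit {p : ℕ} (α α' : D.X p) : Prop :=
  ∃ ρ : Equiv.Perm (Fin (p + 1)), D.act ⇑ρ α = α'

/-- The automorphism group of a simplex. -/
def Aut {p : ℕ} (α : D.X p) : Set (Equiv.Perm (Fin (p + 1))) :=
  {ρ | D.act ⇑ρ α = α}

/-- `α` is a permissible face of `β`. -/
def Permissible {p : ℕ} (α : D.X p) (β : D.X (p + 1)) : Prop :=
  D.IsFace α β ∧
  (∀ θ θ' : Fin (p + 1) → Fin (p + 2), D.Glues θ α β → D.Glues θ' α β →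
    Set.range θ = Set.range θ') ∧
  (∀ ρ : Fin (p + 1) → Fin (p + 2), D.Glues ρ α β →
    ∃ f : D.Aut β ≃ D.Aut α,
      ∀ π : D.Aut β, ρ ∘ ⇑((f π).1) = ⇑(π.1) ∘ ρ)

end SymDelta

theorem Function.Injective.exists_perm_comp_eq_of_range_eq {α β : Type*} {f g : α → β}
    (hf : Function.Injective f) (hg : Function.Injective g) (hfg : Set.range f = Set.range g) :
    ∃ i : Equiv.Perm α, f ∘ i = g :=
  ⟨(Equiv.ofInjective g hg).trans ((Equiv.setCongr hfg.symm).trans (Equiv.ofInjective f hf).symm),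
    funext fun _ => Equiv.apply_ofInjective_symm hf _⟩

theorem Function.Injective.perm_eq_conj_of_comp_eq {α β : Type*} {f g : α → β}
    (hf : Function.Injective f) {i : Equiv.Perm α} (hi : f ∘ i = g) {π : β → β}
    {τ τ' : Equiv.Perm α} (hτ : f ∘ τ = π ∘ f) (hτ' : g ∘ τ' = π ∘ g) :
    τ' = i⁻¹ * τ * i := by
  rw [mul_assoc, eq_inv_mul_iff_mul_eq]
  ext x
  apply hf
  calc f (i (τ' x)) = g (τ' x) := congrFun hi _
    _ = π (g x) := congrFun hτ' x
    _ = π (f (i x)) := by rw [← hi]; rfl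
    _ = f (τ (i x)) := (congrFun hτ (i x)).symm

/-- The map `f_ρ : Aut β → Aut α` is unique up to conjugation by a permutation of `[p]`:
if `ρ` and `ρ'` both glue `α` to `β`, then there is a permutation `i` of `[p]` with
`f_{ρ'}(π) = i⁻¹ ∘ f_ρ(π) ∘ i` for all `π ∈ Aut β`. Here `f_ρ(π)` is characterized by
`ρ ∘ f_ρ(π) = π ∘ ρ`. -/
theorem f_unique_up_to_conjugation (D : SymDelta) {p : ℕ}
    (α : D.X p) (β : D.X (p + 1))
    (ρ ρ' : Fin (p + 1) → Fin (p + 2))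
    (hρ : D.Glues ρ α β) (hρ' : D.Glues ρ' α β)
    (h1 : ∀ θ θ' : Fin (p + 1) → Fin (p + 2), D.Glues θ α β → D.Glues θ' α β →
      Set.range θ = Set.range θ') :
    ∃ i : Equiv.Perm (Fin (p + 1)),
      ∀ π : Equiv.Perm (Fin (p + 2)), π ∈ D.Aut β →
        ∀ τ τ' : Equiv.Perm (Fin (p + 1)),
          ρ ∘ ⇑τ = ⇑π ∘ ρ → ρ' ∘ ⇑τ' = ⇑π ∘ ρ' → τ' = i⁻¹ * τ * i := by
  obtain ⟨i, hi⟩ := hρ.1.exists_perm_comp_eq_of_range_eq hρ'.1 (h1 ρ ρ' hρ hρ')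
  exact ⟨i, fun π _ τ τ' hτ hτ' => hρ.1.perm_eq_conj_of_comp_eq hi hτ hτ'⟩
end

section
/- Let X be a symmetric Δ-complex, 0 ≤ r < p, and suppose γ ∈ X_r, α ∈ X_p, β ∈ X_{p+1} satisfy γ < α < β, with α a permissible face of β. Then there exists a p-simplex α' whose symmetric orbit differs from that of α such that γ < α' < β. -/
/-!
Glue `α` to `β` by `ρ` and `γ` to `α` by `θ`. Since `r < p`, some vertex `i` of `α` is missed by
`θ`; let `α'` be the face of `β` opposite the vertex `j = ρ i`. Then `ρ ∘ θ` avoids `j`, so it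
factors through the face inclusion `j.succAbove` and `γ < α'`. If `α'` were a permutation of `α`,
`α` would be glued to `β` by a map whose image misses `j`, while `ρ` hits `j`; permissibility
says all gluings of `α` to `β` have the same image.
-/

theorem Fin.exists_notMem_range_of_lt {r p : ℕ} (hrp : r < p) (θ : Fin (r + 1) → Fin (p + 1)) :
    ∃ i, i ∉ Set.range θ := by
  by_contra! h
  have := Fintype.card_le_of_surjective θ h
  simp only [Fintype.card_fin] at this
  omega

namespace SymDelta

variable {D : SymDelta}

theorem glues_succAbove {q : ℕ} (β : D.X (q + 1)) (j : Fin (q + 2)) :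
    D.Glues j.succAbove (D.act j.succAbove β) β :=
  ⟨Fin.succAbove_right_injective, rfl⟩

theorem Glues.comp {p q r : ℕ} {θ : Fin (r + 1) → Fin (p + 1)} {ρ : Fin (p + 1) → Fin (q + 1)}
    {γ : D.X r} {α : D.X p} {β : D.X q} (hθ : D.Glues θ γ α) (hρ : D.Glues ρ α β) :
    D.Glues (ρ ∘ θ) γ β :=
  ⟨hρ.1.comp hθ.1, by rw [D.act_comp ρ θ hρ.1 hθ.1, hρ.2, hθ.2]⟩

theorem glues_perm_inv {p : ℕ} {α α' : D.X p} {σ : Equiv.Perm (Fin (p + 1))}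
    (hσ : D.act σ α = α') : D.Glues ⇑σ⁻¹ α α' := by
  refine ⟨σ⁻¹.injective, ?_⟩
  rw [← hσ, ← D.act_comp _ _ σ.injective σ⁻¹.injective, ← Equiv.Perm.coe_mul, mul_inv_cancel,
    Equiv.Perm.coe_one, D.act_id]

theorem Glues.isFace_act_succAbove {r q : ℕ} {φ : Fin (r + 1) → Fin (q + 2)} {γ : D.X r}
    {β : D.X (q + 1)} (hφ : D.Glues φ γ β) {j : Fin (q + 2)} (hj : j ∉ Set.range φ) :
    D.IsFace γ (D.act j.succAbove β) := by
  have hφj : ∀ k, ∃ l, j.succAbove l = φ k := fun k =>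
    Fin.exists_succAbove_eq fun h => hj ⟨k, h⟩
  choose ψ hψ using hφj
  have hfactor : j.succAbove ∘ ψ = φ := funext hψ
  have hψinj : Function.Injective ψ := .of_comp (f := j.succAbove) (hfactor ▸ hφ.1)
  exact ⟨ψ, hψinj, by
    rw [← D.act_comp _ ψ Fin.succAbove_right_injective hψinj, hfactor, hφ.2]⟩

theorem Permissible.not_inOrbit_act_succAbove {p : ℕ} {α : D.X p} {β : D.X (p + 1)}
    (hperm : D.Permissible α β) {ρ : Fin (p + 1) → Fin (p + 2)} (hρ : D.Glues ρ α β)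
    (i : Fin (p + 1)) : ¬ D.InOrbit α (D.act (ρ i).succAbove β) := by
  rintro ⟨σ, hσ⟩
  have hglue := (glues_perm_inv hσ).comp (glues_succAbove β (ρ i))
  obtain ⟨k, hk⟩ : ρ i ∈ Set.range ((ρ i).succAbove ∘ ⇑σ⁻¹) :=
    hperm.2.1 ρ _ hρ hglue ▸ Set.mem_range_self i
  exact Fin.succAbove_ne _ _ hk

end SymDelta

theorem permissible_parent_has_another_child_general (D : SymDelta) {r p : ℕ} (hrp : r < p)
    (γ : D.X r) (α : D.X p) (β : D.X (p + 1))
    (hγα : D.IsFace γ α) (hperm : D.Permissible α β) :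
    ∃ α' : D.X p, ¬ D.InOrbit α α' ∧ D.IsFace γ α' ∧ D.IsFace α' β := by
  obtain ⟨ρ, hρ⟩ := hperm.1
  obtain ⟨θ, hθ⟩ := hγα
  obtain ⟨i, hi⟩ := Fin.exists_notMem_range_of_lt hrp θ
  have hρi : ρ i ∉ Set.range (ρ ∘ θ) := fun ⟨k, hk⟩ => hi ⟨k, hρ.1 hk⟩
  exact ⟨D.act (ρ i).succAbove β, hperm.not_inOrbit_act_succAbove hρ i,
    (hθ.comp hρ).isFace_act_succAbove hρi, _, SymDelta.glues_succAbove β (ρ i)⟩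

/-- If `γ < α < β` with `α` a permissible face of `β`, then there is a `p`-simplex `α'`
in a different symmetric orbit from `α` with `γ < α' < β`. -/
theorem permissible_parent_has_another_child (D : SymDelta) {r p : ℕ} (hrp : r < p)
    (γ : D.X r) (α : D.X p) (β : D.X (p + 1))
    (hγα : D.IsFace γ α) (hαβ : D.IsFace α β) (hperm : D.Permissible α β) :
    ∃ α' : D.X p, ¬ D.InOrbit α α' ∧ D.IsFace γ α' ∧ D.IsFace α' β :=
  permissible_parent_has_another_child_general D hrp γ α β hγα hperm
end

section
/- Let X be a symmetric Δ-complex with a discrete Morse function f, let σ be a p-simplex and τ a k-simplex with σ < τ and k > p. Then there exists a (p+1)-simplex τ' with σ < τ' and f(τ') ≤ f(τ). -/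
/-- A discrete Morse function on a symmetric Δ-complex. -/
structure DiscreteMorseFunction (D : SymDelta) where
  f : ∀ p : ℕ, D.X p → ℝ
  orbit_eq : ∀ (p : ℕ) (α α' : D.X p), D.InOrbit α α' → f p α = f p α'
  lt_of_not_permissible : ∀ (p : ℕ) (α : D.X p) (β : D.X (p + 1)),
    D.IsFace α β → ¬ D.Permissible α β → f p α < f (p + 1) β
  up_subsingleton : ∀ (p : ℕ) (α : D.X p) (β β' : D.X (p + 1)),
    D.Permissible α β → f (p + 1) β ≤ f p α →
    D.Permissible α β' → f (p + 1) β' ≤ f p α → D.InOrbit β β'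
  down_subsingleton : ∀ (p : ℕ) (α : D.X (p + 1)) (γ γ' : D.X p),
    D.Permissible γ α → f (p + 1) α ≤ f p γ →
    D.Permissible γ' α → f (p + 1) α ≤ f p γ' → D.InOrbit γ γ'

/-!
Induct on `k - p`. A `k`-simplex `τ` with `k ≥ p + 2` has at least two vertices outside the
image of `σ`, and the facets of `τ` opposite them both contain `σ`. They cannot both have value
`≥ f(τ)`: such facets would be permissible, hence in one orbit by the Morse condition, and two
facets in one orbit that are permissible have the same vertex set, so they are opposite the same
vertex. Descending to a facet of smaller value reaches dimension `p + 1`.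
-/

theorem Fin.nontrivial_compl_range_of_lt {p m : ℕ} (θ : Fin (p + 1) → Fin (m + 2))
    (hpm : p < m) : (Set.range θ)ᶜ.Nontrivial := by
  rw [← Set.one_lt_ncard_iff_nontrivial, Set.ncard_compl, Nat.card_eq_fintype_card,
    Fintype.card_fin]
  have : (Set.range θ).ncard ≤ p + 1 := by
    simpa [Set.image_univ] using Set.ncard_image_le (f := θ) (s := Set.univ)
  omega

namespace SymDelta

variable (D : SymDelta)

def facet {m : ℕ} (v : Fin (m + 2)) (τ : D.X (m + 1)) : D.X m :=
  D.act v.succAbove τ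

variable {D}

theorem glues_facet {m : ℕ} (v : Fin (m + 2)) (τ : D.X (m + 1)) :
    D.Glues v.succAbove (D.facet v τ) τ :=
  ⟨Fin.succAbove_right_injective, rfl⟩

theorem isFace_facet {m : ℕ} (v : Fin (m + 2)) (τ : D.X (m + 1)) :
    D.IsFace (D.facet v τ) τ :=
  ⟨_, glues_facet v τ⟩

theorem isFace_facet_of_not_mem_range {p m : ℕ} {θ : Fin (p + 1) → Fin (m + 2)} {σ : D.X p}
    {τ : D.X (m + 1)} (hθ : D.Glues θ σ τ) {v : Fin (m + 2)} (hv : v ∉ Set.range θ) :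
    D.IsFace σ (D.facet v τ) := by
  have hlift : ∀ j, ∃ i, v.succAbove i = θ j :=
    fun j => Fin.exists_succAbove_eq fun e => hv ⟨j, e⟩
  choose φ hφ using hlift
  have hφ_inj : Function.Injective φ :=
    fun a b hab => hθ.1 (by rw [← hφ a, ← hφ b, hab])
  refine ⟨φ, hφ_inj, ?_⟩
  rw [facet, ← D.act_comp _ _ Fin.succAbove_right_injective hφ_inj,
    show v.succAbove ∘ φ = θ from funext hφ, hθ.2]

theorem eq_of_inOrbit_facet {m : ℕ} {τ : D.X (m + 1)} {v w : Fin (m + 2)}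
    (hw : D.Permissible (D.facet w τ) τ) (horb : D.InOrbit (D.facet v τ) (D.facet w τ)) :
    v = w := by
  obtain ⟨ρ, hρ⟩ := horb
  have hglue : D.Glues (v.succAbove ∘ ρ) (D.facet w τ) τ := by
    refine ⟨Fin.succAbove_right_injective.comp ρ.injective, ?_⟩
    rw [D.act_comp _ _ Fin.succAbove_right_injective ρ.injective]
    exact hρ
  have hrange := hw.2.1 _ _ hglue (glues_facet w τ)
  rw [ρ.surjective.range_comp, Fin.range_succAbove, Fin.range_succAbove] at hrange
  exact Set.singleton_eq_singleton_iff.mp (compl_inj_iff.mp hrange)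

end SymDelta

namespace DiscreteMorseFunction

variable {D : SymDelta} (F : DiscreteMorseFunction D)

theorem permissible_of_le {p : ℕ} {α : D.X p} {β : D.X (p + 1)} (hαβ : D.IsFace α β)
    (hle : F.f (p + 1) β ≤ F.f p α) : D.Permissible α β := by
  by_contra hnp
  exact (F.lt_of_not_permissible p α β hαβ hnp).not_ge hle

theorem exists_facet_lt {m : ℕ} (τ : D.X (m + 1)) {s : Set (Fin (m + 2))} (hs : s.Nontrivial) :
    ∃ v ∈ s, F.f m (D.facet v τ) < F.f (m + 1) τ := by
  obtain ⟨v, hv, w, hw, hvw⟩ := hs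
  by_contra! hge
  have hv_perm := F.permissible_of_le (SymDelta.isFace_facet v τ) (hge v hv)
  have hw_perm := F.permissible_of_le (SymDelta.isFace_facet w τ) (hge w hw)
  exact hvw (SymDelta.eq_of_inOrbit_facet hw_perm
    (F.down_subsingleton m τ _ _ hv_perm (hge v hv) hw_perm (hge w hw)))

end DiscreteMorseFunction

/-- If `σ < τ` with `dim τ = k > p = dim σ`, then there is a `(p+1)`-simplex `τ'`
with `σ < τ'` and `f(τ') ≤ f(τ)`. -/
theorem exists_coface_one_dim_above (D : SymDelta) (F : DiscreteMorseFunction D)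
    {p k : ℕ} (σ : D.X p) (τ : D.X k) (hpk : p < k) (h : D.IsFace σ τ) :
    ∃ τ' : D.X (p + 1), D.IsFace σ τ' ∧ F.f (p + 1) τ' ≤ F.f k τ := by
  induction k, hpk using Nat.le_induction with
  | base => exact ⟨τ, h, le_rfl⟩
  | succ m hpm ih =>
    obtain ⟨θ, hθ⟩ := h
    obtain ⟨v, hv, hlt⟩ := F.exists_facet_lt τ (Fin.nontrivial_compl_range_of_lt θ hpm)
    obtain ⟨τ', hστ', hle⟩ := ih _ (SymDelta.isFace_facet_of_not_mem_range hθ hv)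
    exact ⟨τ', hστ', hle.trans hlt.le⟩
end

section
/- Let Δ^p ⊂ ℝ^{p+1} be the standard p-simplex and let σ be its facet given by t_p = 0. The map F : Δ^p × [0,1] → Δ^p, F(a,t) = a − t·m_a·v, where m_a = min_{0≤i≤p−1} a_i and v = (1,1,…,1,−p), is a strong deformation retraction from Δ^p onto ∂Δ^p minus the relative interior of σ: F is continuous, F(a,0) = a, F(a,1) ∈ ∂Δ^p \ σ°, and F(a,t) = a for all t whenever a ∈ ∂Δ^p \ σ°. -/
/-!
Since `v = (1,…,1,-p)` has coordinate sum zero, `F(a,t)` keeps the coordinate sum of `a`; its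
first `p` coordinates decrease by `t · m_a ≤ m_a`, so they stay nonnegative, and at `t = 1` the
minimal one among them becomes zero. A point of `∂Δ^p \ σ°` has a zero among its first `p`
coordinates (either directly, or because its last coordinate is zero and it is not in `σ°`),
so `m_a = 0` there and `F(a,·)` is constant.
-/

/-- `m_a = min_{0 ≤ i ≤ p-1} a_i`. -/
noncomputable def mval {p : ℕ} (a : Fin (p + 1) → ℝ) : ℝ :=
  ⨅ i : Fin p, a i.castSucc

/-- The retraction `F(a,t) = a - t · m_a · v` with `v = (1,…,1,-p)`. -/
noncomputable def retr {p : ℕ} (a : Fin (p + 1) → ℝ) (t : ℝ) : Fin (p + 1) → ℝ :=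
  fun i => a i - t * mval a * (if (i : ℕ) = p then -(p : ℝ) else 1)

/-- The boundary `∂Δ^p`: points of the simplex with some zero coordinate. -/
def simplexBoundary (p : ℕ) : Set (Fin (p + 1) → ℝ) :=
  {a | a ∈ stdSimplex ℝ (Fin (p + 1)) ∧ ∃ i, a i = 0}

/-- The relative interior `σ°` of the facet `t_p = 0`. -/
def facetInterior (p : ℕ) : Set (Fin (p + 1) → ℝ) :=
  {a | a ∈ stdSimplex ℝ (Fin (p + 1)) ∧ a (Fin.last p) = 0 ∧ ∀ i : Fin p, 0 < a i.castSucc}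

section Mval

variable {p : ℕ}

lemma mval_le (a : Fin (p + 1) → ℝ) (i : Fin p) : mval a ≤ a i.castSucc :=
  ciInf_le (Finite.bddBelow_range _) i

lemma mval_nonneg {a : Fin (p + 1) → ℝ} (ha : ∀ i, 0 ≤ a i) : 0 ≤ mval a :=
  Real.iInf_nonneg fun _ => ha _

lemma exists_mval_eq (hp : 0 < p) (a : Fin (p + 1) → ℝ) : ∃ i : Fin p, mval a = a i.castSucc := by
  have : Nonempty (Fin p) := ⟨⟨0, hp⟩⟩
  obtain ⟨i, hi⟩ := Finite.exists_min fun i : Fin p => a i.castSucc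
  exact ⟨i, le_antisymm (mval_le a i) (le_ciInf hi)⟩

lemma mval_eq_zero_of_apply_castSucc_eq_zero {a : Fin (p + 1) → ℝ} (ha : ∀ i, 0 ≤ a i)
    {i : Fin p} (hi : a i.castSucc = 0) : mval a = 0 :=
  le_antisymm (hi ▸ mval_le a i) (mval_nonneg ha)

lemma continuous_mval : Continuous (mval : (Fin (p + 1) → ℝ) → ℝ) := by
  change Continuous fun a : Fin (p + 1) → ℝ => ⨅ i : Fin p, a i.castSucc
  rcases isEmpty_or_nonempty (Fin p) with hp | hp
  · simp only [Real.iInf_of_isEmpty]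
    exact continuous_const
  · simp only [← Finset.inf'_univ_eq_ciInf]
    exact Continuous.finset_inf'_apply _ fun i _ => continuous_apply _

lemma mval_eq_zero_of_mem_boundary_diff_facetInterior {a : Fin (p + 1) → ℝ}
    (ha : a ∈ simplexBoundary p \ facetInterior p) : mval a = 0 := by
  obtain ⟨⟨hΔ, i, hi⟩, hσ⟩ := ha
  induction i using Fin.lastCases with
  | last =>
    obtain ⟨j, hj⟩ : ∃ j : Fin p, a j.castSucc ≤ 0 := by
      by_contra! h
      exact hσ ⟨hΔ, hi, h⟩
    exact mval_eq_zero_of_apply_castSucc_eq_zero hΔ.1 (le_antisymm hj (hΔ.1 _))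
  | cast i => exact mval_eq_zero_of_apply_castSucc_eq_zero hΔ.1 hi

end Mval

section Retr

variable {p : ℕ}

@[simp]
lemma retr_apply_castSucc (a : Fin (p + 1) → ℝ) (t : ℝ) (i : Fin p) :
    retr a t i.castSucc = a i.castSucc - t * mval a := by
  simp [retr, i.isLt.ne]

@[simp]
lemma retr_apply_last (a : Fin (p + 1) → ℝ) (t : ℝ) :
    retr a t (Fin.last p) = a (Fin.last p) + p * (t * mval a) := by
  simp only [retr, Fin.val_last, if_true]
  ring

lemma sum_retr (a : Fin (p + 1) → ℝ) (t : ℝ) : ∑ i, retr a t i = ∑ i, a i := by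
  simp only [Fin.sum_univ_castSucc, retr_apply_castSucc, retr_apply_last, Finset.sum_sub_distrib,
    Finset.sum_const, Finset.card_univ, Fintype.card_fin, nsmul_eq_mul]
  ring

lemma retr_zero (a : Fin (p + 1) → ℝ) : retr a 0 = a := by
  funext i
  simp [retr]

lemma retr_of_mval_eq_zero {a : Fin (p + 1) → ℝ} (ha : mval a = 0) (t : ℝ) : retr a t = a := by
  funext i
  simp [retr, ha]

lemma continuous_retr : Continuous fun x : (Fin (p + 1) → ℝ) × ℝ => retr x.1 x.2 :=
  continuous_pi fun i =>
    ((continuous_apply i).comp continuous_fst).sub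
      ((continuous_snd.mul (continuous_mval.comp continuous_fst)).mul continuous_const)

lemma retr_mem_stdSimplex {a : Fin (p + 1) → ℝ} (ha : a ∈ stdSimplex ℝ (Fin (p + 1))) {t : ℝ}
    (ht : t ∈ Set.Icc (0 : ℝ) 1) : retr a t ∈ stdSimplex ℝ (Fin (p + 1)) := by
  have hm : 0 ≤ mval a := mval_nonneg ha.1
  have htm : 0 ≤ t * mval a := mul_nonneg ht.1 hm
  refine ⟨fun i => ?_, (sum_retr a t).trans ha.2⟩
  induction i using Fin.lastCases with
  | last =>
    rw [retr_apply_last]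
    have := ha.1 (Fin.last p)
    positivity
  | cast i =>
    rw [retr_apply_castSucc, sub_nonneg]
    calc t * mval a ≤ 1 * mval a := mul_le_mul_of_nonneg_right ht.2 hm
      _ ≤ a i.castSucc := (one_mul (mval a)).symm ▸ mval_le a i

lemma retr_one_mem_boundary_diff_facetInterior (hp : 0 < p) {a : Fin (p + 1) → ℝ}
    (ha : a ∈ stdSimplex ℝ (Fin (p + 1))) : retr a 1 ∈ simplexBoundary p \ facetInterior p := by
  obtain ⟨i, hi⟩ := exists_mval_eq hp a
  have hzero : retr a 1 i.castSucc = 0 := by simp [hi]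
  exact ⟨⟨retr_mem_stdSimplex ha ⟨zero_le_one, le_rfl⟩, i.castSucc, hzero⟩,
    fun hσ => (hσ.2.2 i).ne' hzero⟩

end Retr

/-- `F` is a strong deformation retraction of `Δ^p` onto `∂Δ^p \ σ°`. -/
theorem retr_strong_deformation_retraction {p : ℕ} (hp : 0 < p) :
    Continuous (fun x : (Fin (p + 1) → ℝ) × ℝ => retr x.1 x.2) ∧
    (∀ a ∈ stdSimplex ℝ (Fin (p + 1)), ∀ t ∈ Set.Icc (0 : ℝ) 1,
      retr a t ∈ stdSimplex ℝ (Fin (p + 1))) ∧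
    (∀ a ∈ stdSimplex ℝ (Fin (p + 1)), retr a 0 = a) ∧
    (∀ a ∈ stdSimplex ℝ (Fin (p + 1)), retr a 1 ∈ simplexBoundary p \ facetInterior p) ∧
    (∀ a ∈ simplexBoundary p \ facetInterior p, ∀ t ∈ Set.Icc (0 : ℝ) 1, retr a t = a) :=
  ⟨continuous_retr,
    fun _ ha _ ht => retr_mem_stdSimplex ha ht,
    fun a _ => retr_zero a,
    fun _ ha => retr_one_mem_boundary_diff_facetInterior hp ha,
    fun _ ha t _ => retr_of_mval_eq_zero (mval_eq_zero_of_mem_boundary_diff_facetInterior ha) t⟩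
end

section
/- Let P be a finite poset and M an acyclic partial matching on P. Then there exists a function g : P → ℝ that is strictly decreasing along each directed path of the associated directed Hasse diagram (edges of the Hasse diagram oriented from larger to smaller element, with the orientation reversed on edges belonging to M). -/
/-- A partial matching on a poset: a set of covering pairs such that each element
belongs to at most one pair. -/
def IsPartialMatching {P : Type*} [PartialOrder P] (M : Set (P × P)) : Prop :=
  (∀ e ∈ M, e.1 ⋖ e.2) ∧ ∀ a : P, {e | e ∈ M ∧ (e.1 = a ∨ e.2 = a)}.Subsingleton

/-- The directed edges of the modified Hasse diagram: Hasse edges oriented downward,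
with matched edges reversed (oriented upward). -/
def MatchStep {P : Type*} [PartialOrder P] (M : Set (P × P)) (x y : P) : Prop :=
  (y ⋖ x ∧ (y, x) ∉ M) ∨ (x, y) ∈ M

/-! Count the elements reachable from a vertex: an edge `x → y` makes everything reachable
from `y` reachable from `x`, and acyclicity means `y` itself is reachable from `x` but not
from `y`, so the count drops strictly along every edge. -/

namespace Relation

variable {α : Type*} {r : α → α → Prop}

theorem transGen_ssubset_of_rel (hr : ∀ x, ¬ TransGen r x x) {x y : α} (h : r x y) :
    {z | TransGen r y z} ⊂ {z | TransGen r x z} :=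
  ⟨fun _ hz => TransGen.head h hz, fun hsub => hr y (hsub (TransGen.single h))⟩

theorem exists_real_decreasing_of_acyclic [Finite α] (hr : ∀ x, ¬ TransGen r x x) :
    ∃ g : α → ℝ, ∀ x y, r x y → g y < g x :=
  ⟨fun x => {z | TransGen r x z}.ncard, fun _ _ h =>
    Nat.cast_lt.mpr (Set.ncard_lt_ncard (transGen_ssubset_of_rel hr h))⟩

end Relation

theorem exists_decreasing_function_general {P : Type*} [Fintype P] [PartialOrder P]
    (M : Set (P × P))
    (hacyc : ∀ x : P, ¬ Relation.TransGen (MatchStep M) x x) :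
    ∃ g : P → ℝ, ∀ x y : P, MatchStep M x y → g y < g x :=
  Relation.exists_real_decreasing_of_acyclic hacyc

/-- Given an acyclic partial matching on a finite poset, there is a real-valued function
strictly decreasing along every directed edge (hence along every directed path) of the
modified Hasse diagram. -/
theorem exists_decreasing_function {P : Type*} [Fintype P] [PartialOrder P]
    (M : Set (P × P)) (hM : IsPartialMatching M)
    (hacyc : ∀ x : P, ¬ Relation.TransGen (MatchStep M) x x) :
    ∃ g : P → ℝ, ∀ x y : P, MatchStep M x y → g y < g x :=
  exists_decreasing_function_general M hacyc
end

section
/- Let X be a symmetric Δ-complex, Δ^p the standard simplex, and α ∈ X_p. If two points a, b in the interior of Δ^p satisfy (α, a) ∼ (α, b) in the geometric realization |X| (i.e., they map to the same point), then there exists π ∈ Aut(α) with π·a = b, where π acts by permuting barycentric coordinates. -/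
open Finset in
/-- The pushforward `θ_*` on barycentric coordinates. -/
noncomputable def push {p q : ℕ} (θ : Fin p → Fin q) (t : Fin p → ℝ) : Fin q → ℝ :=
  fun i => ∑ j ∈ Finset.univ.filter (fun j => θ j = i), t j

/-- The generating relation of the geometric realization: `(x, θ_* a) ∼ (θ* x, a)`. -/
def RealRel (D : SymDelta) :
    (Σ p : ℕ, D.X p × (Fin (p + 1) → ℝ)) → (Σ p : ℕ, D.X p × (Fin (p + 1) → ℝ)) → Prop :=
  fun s t => ∃ (p q : ℕ) (θ : Fin (p + 1) → Fin (q + 1)) (x : D.X q) (a : Fin (p + 1) → ℝ),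
    Function.Injective θ ∧ s = ⟨q, (x, push θ a)⟩ ∧ t = ⟨p, (D.act θ x, a)⟩


/-
If `(α, a)` with `a` interior is connected to `(β, c)` by the generating relation, then
`(β, c) = (β, θ_* a)` for an injection `θ` with `θ* β = α`: being such a coface image is preserved
by both directions of `(x, θ_* a) ∼ (θ* x, a)`, the downward one because a positive coordinate
of `a` can only be carried by the image of the gluing map. For `β = α` in the same dimension,
`θ` is a permutation fixing `α`.
-/

open Function

lemma push_apply_of_injective {m n : ℕ} {θ : Fin m → Fin n} (hθ : Injective θ)
    (a : Fin m → ℝ) (i : Fin m) : push θ a (θ i) = a i := by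
  simp [push, Finset.filter_eq', hθ.eq_iff]

lemma push_apply_eq_zero_of_notMem_range {m n : ℕ} {θ : Fin m → Fin n} (a : Fin m → ℝ)
    {j : Fin n} (hj : j ∉ Set.range θ) : push θ a j = 0 :=
  Finset.sum_eq_zero fun i hi => absurd ⟨i, (Finset.mem_filter.mp hi).2⟩ hj

lemma push_id {m : ℕ} (a : Fin m → ℝ) : push id a = a := by
  funext i
  simp [push, Finset.filter_eq']

lemma push_comp {m n r : ℕ} (φ : Fin n → Fin r) (θ : Fin m → Fin n) (a : Fin m → ℝ) :
    push (φ ∘ θ) a = push φ (push θ a) := by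
  funext k
  simp only [push]
  rw [← Finset.sum_biUnion]
  · congr 1
    ext i
    simp
  · intro j _ j' _ hjj'
    simp only [Finset.disjoint_left, Finset.mem_filter, Finset.mem_univ, true_and]
    intro i hi hi'
    exact hjj' (hi ▸ hi')

lemma exists_comp_eq_of_push_eq {k m n : ℕ} {θ : Fin m → Fin n} {θ' : Fin k → Fin n}
    (hθ : Injective θ) (hθ' : Injective θ') {a : Fin m → ℝ} (ha : ∀ i, a i ≠ 0)
    {a' : Fin k → ℝ} (h : push θ' a' = push θ a) :
    ∃ ψ : Fin m → Fin k, Injective ψ ∧ θ' ∘ ψ = θ ∧ a' = push ψ a := by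
  have hrange : ∀ i, θ i ∈ Set.range θ' := fun i => by
    by_contra hi
    have := push_apply_eq_zero_of_notMem_range a' hi
    rw [h, push_apply_of_injective hθ] at this
    exact ha i this
  choose ψ hψ using hrange
  have hcomp : θ' ∘ ψ = θ := funext hψ
  refine ⟨ψ, (hcomp ▸ hθ).of_comp, hcomp, funext fun j => ?_⟩
  rw [← push_apply_of_injective hθ' a' j, h, ← hcomp, push_comp,
    push_apply_of_injective hθ']

namespace SymDelta

variable (D : SymDelta)

def IsCofaceImage {p : ℕ} (α : D.X p) (a : Fin (p + 1) → ℝ)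
    (s : Σ q : ℕ, D.X q × (Fin (q + 1) → ℝ)) : Prop :=
  ∃ θ : Fin (p + 1) → Fin (s.1 + 1), D.Glues θ α s.2.1 ∧ s.2.2 = push θ a

variable {D}

lemma isCofaceImage_self {p : ℕ} (α : D.X p) (a : Fin (p + 1) → ℝ) :
    D.IsCofaceImage α a ⟨p, (α, a)⟩ :=
  ⟨id, ⟨injective_id, D.act_id p α⟩, (push_id a).symm⟩

lemma isCofaceImage_iff_of_realRel {p : ℕ} {α : D.X p} {a : Fin (p + 1) → ℝ}
    (ha : ∀ i, a i ≠ 0) {s t : Σ q : ℕ, D.X q × (Fin (q + 1) → ℝ)} (h : RealRel D s t) :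
    D.IsCofaceImage α a s ↔ D.IsCofaceImage α a t := by
  obtain ⟨m, n, φ, x, c, hφ, rfl, rfl⟩ := h
  constructor
  · rintro ⟨θ, ⟨hθ, hθx⟩, hc : push φ c = push θ a⟩
    obtain ⟨ψ, hψ, hφψ, hcψ⟩ := exists_comp_eq_of_push_eq hθ hφ ha hc
    exact ⟨ψ, ⟨hψ, by rw [← D.act_comp φ ψ hφ hψ, hφψ, hθx]⟩, hcψ⟩
  · rintro ⟨θ, ⟨hθ, hθx⟩, hc⟩
    dsimp only at θ hθx hc
    subst hc
    exact ⟨φ ∘ θ, ⟨hφ.comp hθ, by rw [D.act_comp φ θ hφ hθ, hθx]⟩, (push_comp φ θ a).symm⟩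

lemma isCofaceImage_iff_of_eqvGen {p : ℕ} {α : D.X p} {a : Fin (p + 1) → ℝ}
    (ha : ∀ i, a i ≠ 0) {s t : Σ q : ℕ, D.X q × (Fin (q + 1) → ℝ)}
    (h : Relation.EqvGen (RealRel D) s t) :
    D.IsCofaceImage α a s ↔ D.IsCofaceImage α a t := by
  induction h with
  | rel _ _ h => exact isCofaceImage_iff_of_realRel ha h
  | refl _ => exact Iff.rfl
  | symm _ _ _ ih => exact ih.symm
  | trans _ _ _ _ _ ih₁ ih₂ => exact ih₁.trans ih₂

end SymDelta

theorem interior_points_identified_by_aut_general (D : SymDelta) {p : ℕ} (α : D.X p)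
    (a b : Fin (p + 1) → ℝ)
    (hai : ∀ i, 0 < a i)
    (hrel : Relation.EqvGen (RealRel D) ⟨p, (α, a)⟩ ⟨p, (α, b)⟩) :
    ∃ π : Equiv.Perm (Fin (p + 1)), π ∈ D.Aut α ∧ push ⇑π a = b := by
  obtain ⟨θ, ⟨hθ, hθα⟩, hb⟩ :=
    (SymDelta.isCofaceImage_iff_of_eqvGen (fun i => (hai i).ne') hrel).mp
      (SymDelta.isCofaceImage_self α a)
  exact ⟨Equiv.ofBijective θ (Finite.injective_iff_bijective.mp hθ), hθα, hb.symm⟩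

/-- If two interior points `a`, `b` of `Δ^p` satisfy `(α,a) ∼ (α,b)` in the geometric
realization, then they differ by an automorphism of `α` permuting barycentric coordinates. -/
theorem interior_points_identified_by_aut (D : SymDelta) {p : ℕ} (α : D.X p)
    (a b : Fin (p + 1) → ℝ)
    (ha : a ∈ stdSimplex ℝ (Fin (p + 1))) (hb : b ∈ stdSimplex ℝ (Fin (p + 1)))
    (hai : ∀ i, 0 < a i) (hbi : ∀ i, 0 < b i)
    (hrel : Relation.EqvGen (RealRel D) ⟨p, (α, a)⟩ ⟨p, (α, b)⟩) :
    ∃ π : Equiv.Perm (Fin (p + 1)), π ∈ D.Aut α ∧ push ⇑π a = b :=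
  interior_points_identified_by_aut_general D α a b hai hrel
end
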